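/- Fix a finite nonempty index set Φ, a nonempty finite outcome set A, a natural number K, for every f ∈ Φ a matrix R^f ∈ ℝ^{A×K} with rows r^f(a), and a probability distribution σ̃ on A. Define the dual objective D(λ) = Σ_{f∈Φ} max_{g∈Φ} ( (Σ_{a∈A} σ̃_a r^g(a)) · λ^f ) + log Σ_{a∈A} exp( −Σ_{f∈Φ} r^f(a)·λ^f ) for λ = (λ^f)_{f∈Φ} with each λ^f ∈ ℝ^K. Then weak duality holds: for every σ̂ in the ICE polytope determined by σ̃ and every such λ, H(σ̂) ≤ D(λ). -/

import Mathlib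

open Finset

/-- Membership in the ICE polytope determined by `σt`: `σh` is a distribution on
`A` such that for every `f ∈ Φ` there is a probability vector `η ∈ Δ(Φ)` with
`σhᵀR^f = Σ_g η_g σtᵀR^g`. -/
def memICE {Φ A : Type*} [Fintype Φ] [Fintype A] {K : ℕ}
    (R : Φ → A → Fin K → ℝ) (σt σh : A → ℝ) : Prop :=
  σh ∈ stdSimplex ℝ A ∧
    ∀ f : Φ, ∃ η : Φ → ℝ, η ∈ stdSimplex ℝ Φ ∧
      ∀ k : Fin K, ∑ a, σh a * R f a k = ∑ g, η g * ∑ a, σt a * R g a k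

/-- Shannon entropy of a distribution on a finite set, with the convention
`0 · log 0 = 0` (note `Real.log 0 = 0` in Mathlib). -/
noncomputable def shannonEntropy {A : Type*} [Fintype A] (σ : A → ℝ) : ℝ :=
  -∑ a, σ a * Real.log (σ a)

/-- The dual objective of the MaxEnt ICE problem determined by `σt`. -/
noncomputable def dualObj {Φ A : Type*} [Fintype Φ] [Nonempty Φ] [Fintype A]
    {K : ℕ} (R : Φ → A → Fin K → ℝ) (σt : A → ℝ) (l : Φ → Fin K → ℝ) : ℝ :=
  (∑ f : Φ, univ.sup' univ_nonempty
      (fun g : Φ => ∑ k, (∑ a, σt a * R g a k) * l f k)) +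
    Real.log (∑ a, Real.exp (-∑ f : Φ, ∑ k, R f a k * l f k))

/-!
Gibbs' variational inequality bounds the entropy of `σh` by `Σ_a σh_a c_a + log Σ_a exp (-c_a)`
for any potential `c`; take `c_a = Σ_f r^f(a) · λ^f`. The ICE constraints write each moment
`σhᵀR^f · λ^f` as a convex combination of the moments `σtᵀR^g · λ^f`, which is at most their
maximum over `g`.
-/

lemma sub_le_mul_log_sub_mul_log {x p : ℝ} (hx : 0 ≤ x) (hp : 0 < p) :
    x - p ≤ x * Real.log x - x * Real.log p := by
  rcases hx.eq_or_lt with rfl | hx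
  · simpa using hp.le
  have hlog := Real.log_le_sub_one_of_pos (div_pos hp hx)
  rw [Real.log_div hp.ne' hx.ne'] at hlog
  have hscaled := mul_le_mul_of_nonneg_left hlog hx.le
  rw [mul_sub, mul_sub, mul_div_cancel₀ p hx.ne', mul_one] at hscaled
  linarith

lemma shannonEntropy_le_sum_mul_add_sum_exp_sub_one {A : Type*} [Fintype A] {σ : A → ℝ}
    (hσ : σ ∈ stdSimplex ℝ A) (c : A → ℝ) :
    shannonEntropy σ ≤ ∑ a, σ a * c a + (∑ a, Real.exp (-c a) - 1) := by
  have hterm : ∀ a, σ a - Real.exp (-c a) ≤ σ a * Real.log (σ a) + σ a * c a := fun a => by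
    have := sub_le_mul_log_sub_mul_log (hσ.1 a) (Real.exp_pos (-c a))
    rw [Real.log_exp] at this
    linarith
  have hsum := sum_le_sum fun a (_ : a ∈ univ) => hterm a
  rw [sum_sub_distrib, sum_add_distrib, hσ.2] at hsum
  rw [shannonEntropy]
  linarith

theorem shannonEntropy_le_sum_mul_add_log_sum_exp {A : Type*} [Fintype A] {σ : A → ℝ}
    (hσ : σ ∈ stdSimplex ℝ A) (c : A → ℝ) :
    shannonEntropy σ ≤ ∑ a, σ a * c a + Real.log (∑ a, Real.exp (-c a)) := by
  set Z := ∑ a, Real.exp (-c a)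
  have hA : (univ : Finset A).Nonempty :=
    nonempty_of_sum_ne_zero (hσ.2.symm ▸ one_ne_zero)
  have hZ : 0 < Z := sum_pos (fun a _ => Real.exp_pos _) hA
  -- After shifting `c` by `log Z` the partition function is `1`, where the bound `Z - 1` is tight.
  have h := shannonEntropy_le_sum_mul_add_sum_exp_sub_one hσ (fun a => c a + Real.log Z)
  have hnorm : ∑ a, Real.exp (-(c a + Real.log Z)) = 1 := by
    simp only [neg_add, Real.exp_add, Real.exp_neg (Real.log Z), Real.exp_log hZ, ← sum_mul]
    exact mul_inv_cancel₀ hZ.ne'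
  rwa [hnorm, sub_self, add_zero, funext fun a => mul_add (σ a) (c a) (Real.log Z),
    sum_add_distrib, ← sum_mul, hσ.2, one_mul] at h

lemma sum_mul_le_sup'_of_mem_stdSimplex {ι : Type*} [Fintype ι] [Nonempty ι] {η : ι → ℝ}
    (hη : η ∈ stdSimplex ℝ ι) (v : ι → ℝ) :
    ∑ i, η i * v i ≤ univ.sup' univ_nonempty v :=
  calc ∑ i, η i * v i ≤ ∑ i, η i * univ.sup' univ_nonempty v :=
        sum_le_sum fun i hi => mul_le_mul_of_nonneg_left (le_sup' v hi) (hη.1 i)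
    _ = univ.sup' univ_nonempty v := by rw [← sum_mul, hη.2, one_mul]

lemma memICE.sum_moment_mul_le_sup' {Φ A : Type*} [Fintype Φ] [Nonempty Φ] [Fintype A]
    {K : ℕ} {R : Φ → A → Fin K → ℝ} {σt σh : A → ℝ} (h : memICE R σt σh) (f : Φ)
    (w : Fin K → ℝ) :
    ∑ k, (∑ a, σh a * R f a k) * w k ≤
      univ.sup' univ_nonempty (fun g => ∑ k, (∑ a, σt a * R g a k) * w k) := by
  obtain ⟨η, hη, hmoment⟩ := h.2 f
  calc ∑ k, (∑ a, σh a * R f a k) * w k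
      = ∑ g, η g * ∑ k, (∑ a, σt a * R g a k) * w k := by
        simp only [hmoment, sum_mul, mul_sum, mul_assoc]
        exact sum_comm
    _ ≤ _ := sum_mul_le_sup'_of_mem_stdSimplex hη _

theorem maxEntICE_weak_duality_general
    {Φ A : Type*} [Fintype Φ] [Nonempty Φ] [Fintype A]
    {K : ℕ} (R : Φ → A → Fin K → ℝ)
    (σt : A → ℝ)
    (σh : A → ℝ) (hσh : memICE R σt σh) (l : Φ → Fin K → ℝ) :
    shannonEntropy σh ≤ dualObj R σt l := by
  have hswap : ∑ a, σh a * ∑ f, ∑ k, R f a k * l f k =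
      ∑ f, ∑ k, (∑ a, σh a * R f a k) * l f k := by
    simp only [mul_sum, sum_mul, mul_assoc]
    rw [sum_comm]
    exact sum_congr rfl fun f _ => sum_comm
  have hlinear : ∑ a, σh a * ∑ f, ∑ k, R f a k * l f k ≤
      ∑ f, univ.sup' univ_nonempty (fun g => ∑ k, (∑ a, σt a * R g a k) * l f k) :=
    hswap ▸ sum_le_sum fun f _ => hσh.sum_moment_mul_le_sup' f (l f)
  calc shannonEntropy σh
      ≤ ∑ a, σh a * (∑ f, ∑ k, R f a k * l f k) +
          Real.log (∑ a, Real.exp (-∑ f, ∑ k, R f a k * l f k)) :=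
        shannonEntropy_le_sum_mul_add_log_sum_exp hσh.1 _
    _ ≤ dualObj R σt l := add_le_add_left hlinear _

/-- **Weak duality for MaxEnt ICE.**
For every `σh` in the ICE polytope determined by `σt` and every collection of
dual multipliers `l = (λ^f)_{f∈Φ}`, the Shannon entropy of `σh` is at most the
dual objective `D(l)`. -/
theorem maxEntICE_weak_duality
    {Φ A : Type*} [Fintype Φ] [Nonempty Φ] [Fintype A] [Nonempty A]
    {K : ℕ} (R : Φ → A → Fin K → ℝ)
    (σt : A → ℝ) (hσt : σt ∈ stdSimplex ℝ A)
    (σh : A → ℝ) (hσh : memICE R σt σh) (l : Φ → Fin K → ℝ) :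
    shannonEntropy σh ≤ dualObj R σt l :=
  maxEntICE_weak_duality_general R σt σh hσh l
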